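/- Let B_0 ∈ ℂ^{m×m} be invertible and symmetric, and let Z_1, Z_2, … ∈ ℂ^{m×m} be skew-symmetric (Z_nᵀ = −Z_n). Define V_0 := I_m, V_1 := (1/2)B_0^{-1}Z_1 and V_{n+1} := (1/2)B_0^{-1}( Z_{n+1} − Σ_{j=1}^{n} V_jᵀ B_0 V_{n+1−j} ) for n ≥ 1. Then for every n ≥ 1: Σ_{j=0}^{n} V_jᵀ B_0 V_{n−j} = 0. Equivalently, for every α ≥ 1 the block upper-triangular Toeplitz matrix 𝒱 := T(I_m, V_1, …, V_{α−1}) satisfies E_α(I_m)·𝒱ᵀ·E_α(I_m)·(⊕_{i=1}^{α} B_0)·𝒱 = ⊕_{i=1}^{α} B_0. -/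

import Mathlib

open Matrix

noncomputable section

/-- Form (0T0): block matrix partitioned by Jordan structure `(α, m)` whose `(r,s)` block,
viewed as an `α r × α s` array of `m r × m s` blocks, is a rectangular block
upper-triangular Toeplitz matrix aligned to the top-right corner. -/
def IsForm0T0 {N : ℕ} (α m : Fin N → ℕ)
    (X : Matrix (Σ r : Fin N, Fin (α r) × Fin (m r)) (Σ r : Fin N, Fin (α r) × Fin (m r)) ℂ) :
    Prop :=
  ∃ A : ∀ r s : Fin N, ℕ → Matrix (Fin (m r)) (Fin (m s)) ℂ,
    ∀ (r s : Fin N) (i : Fin (α r)) (j : Fin (α s)) (a : Fin (m r)) (b : Fin (m s)),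
      X ⟨r, (i, a)⟩ ⟨s, (j, b)⟩ =
        if (i : ℕ) + (α s - min (α r) (α s)) ≤ (j : ℕ) then
          A r s ((j : ℕ) - (i : ℕ) - (α s - min (α r) (α s))) a b
        else 0

/-- `E_b(I_m)`: the `bm × bm` block matrix with `I_m` on the block anti-diagonal. -/
def revE (b m : ℕ) : Matrix (Fin b × Fin m) (Fin b × Fin m) ℂ :=
  Matrix.of fun p q => if (p.1 : ℕ) + (q.1 : ℕ) + 1 = b ∧ p.2 = q.2 then 1 else 0

/-- `F = ⊕_r E_{α r}(I_{m r})`. -/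
def bigF {N : ℕ} (α m : Fin N → ℕ) :
    Matrix (Σ r : Fin N, Fin (α r) × Fin (m r)) (Σ r : Fin N, Fin (α r) × Fin (m r)) ℂ :=
  Matrix.blockDiagonal' fun r => revE (α r) (m r)

/-- The `n × n` upper-triangular Jordan block `J_n(λ)`. -/
def Jmat (n : ℕ) (lam : ℂ) : Matrix (Fin n) (Fin n) ℂ :=
  Matrix.of fun i j => if (j : ℕ) = (i : ℕ) then lam else if (j : ℕ) = (i : ℕ) + 1 then 1 else 0

/-- The `n × n` backward identity matrix `E_n`. -/
def ErevC (n : ℕ) : Matrix (Fin n) (Fin n) ℂ :=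
  Matrix.of fun i j => if (i : ℕ) + (j : ℕ) + 1 = n then 1 else 0

/-- `P_n = (1/√2)(I + i E_n)`. -/
noncomputable def Pmat (n : ℕ) : Matrix (Fin n) (Fin n) ℂ :=
  (Real.sqrt 2 : ℂ)⁻¹ • (1 + Complex.I • ErevC n)

/-- `P_n⁻¹ = (1/√2)(I − i E_n)`. -/
noncomputable def PmatInv (n : ℕ) : Matrix (Fin n) (Fin n) ℂ :=
  (Real.sqrt 2 : ℂ)⁻¹ • (1 - Complex.I • ErevC n)

/-- The symmetric canonical form `K_n(λ) = P_n J_n(λ) P_n⁻¹` of a Jordan block. -/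
noncomputable def Kmat (n : ℕ) (lam : ℂ) : Matrix (Fin n) (Fin n) ℂ :=
  Pmat n * Jmat n lam * PmatInv n

/-- `T(A_0, …)`: the `β × β` block upper-triangular Toeplitz matrix with blocks `A_j`. -/
def blkToeplitz (β p q : ℕ) (A : ℕ → Matrix (Fin p) (Fin q) ℂ) :
    Matrix (Fin β × Fin p) (Fin β × Fin q) ℂ :=
  Matrix.of fun x y =>
    if (x.1 : ℕ) ≤ (y.1 : ℕ) then A ((y.1 : ℕ) - (x.1 : ℕ)) x.2 y.2 else 0

/-- The `(i,i)`-th `m r × m r` entry-block of the `(r,r)` diagonal block of `X`; for a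
matrix of form (0T0) this is the leading Toeplitz coefficient `A^{rr}_0`. -/
def diagLead {N : ℕ} (α m : Fin N → ℕ)
    (X : Matrix (Σ r : Fin N, Fin (α r) × Fin (m r)) (Σ r : Fin N, Fin (α r) × Fin (m r)) ℂ)
    (r : Fin N) (i : Fin (α r)) : Matrix (Fin (m r)) (Fin (m r)) ℂ :=
  Matrix.of fun a b => X ⟨r, (i, a)⟩ ⟨r, (i, b)⟩

/-- The space of skew-symmetric matrices commuting with `S`. -/
def skewCommSubmodule (ι : Type*) [Fintype ι] [DecidableEq ι] (S : Matrix ι ι ℂ) :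
    Submodule ℂ (Matrix ι ι ℂ) where
  carrier := {X | Xᵀ = -X ∧ X * S = S * X}
  add_mem' := by
    rintro a b ⟨ha1, ha2⟩ ⟨hb1, hb2⟩
    refine ⟨?_, ?_⟩
    · rw [Matrix.transpose_add, ha1, hb1, neg_add]
    · rw [add_mul, mul_add, ha2, hb2]
  zero_mem' := by
    refine ⟨?_, ?_⟩
    · simp
    · simp
  smul_mem' := by
    rintro c a ⟨h1, h2⟩
    refine ⟨?_, ?_⟩
    · rw [Matrix.transpose_smul, h1, smul_neg]
    · rw [Matrix.smul_mul, Matrix.mul_smul, h2]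

/-- The isotropy group (as a set) of `S` under orthogonal similarity. -/
def sigmaSet {ι : Type*} [Fintype ι] [DecidableEq ι] (S : Matrix ι ι ℂ) : Set (Matrix ι ι ℂ) :=
  {Q | Qᵀ * Q = 1 ∧ Qᵀ * S * Q = S}

end

open Finset

/-!
Write `S_n := Σ_{j=0}^n V_jᵀ B_0 V_{n-j}`. Since `B_0` is symmetric, reflecting `j ↦ n - j` shows
`S_nᵀ = S_n`. For `n ≥ 1` the two outer terms of `S_n` are `B_0 V_n` and its transpose, so the
inner part `M_n` is symmetric too, and the recursion says `B_0 V_n = ½ (Z_n - M_n)`. Hence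
`S_n = ½ (Z_n - M_n) + M_n + ½ (-Z_n - M_n) = 0`.

For the matrix identity, upper-triangular block Toeplitz matrices multiply by convolving their
symbols, `E_α 𝒱ᵀ E_α = T(V_0ᵀ, …, V_{α-1}ᵀ)`, and `⊕ B_0 = T(B_0, 0, …, 0)`; so the left-hand side
is `T(S_0, …, S_{α-1}) = T(B_0, 0, …, 0)`.
-/

section TransposeConvolution

variable {ι R : Type*} [Fintype ι] [CommSemiring R]

theorem transpose_sum_range_transpose_mul_mul {B : Matrix ι ι R} (hB : Bᵀ = B)
    (V : ℕ → Matrix ι ι R) (n : ℕ) :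
    (∑ j ∈ range (n + 1), (V j)ᵀ * B * V (n - j))ᵀ =
      ∑ j ∈ range (n + 1), (V j)ᵀ * B * V (n - j) := by
  simp only [transpose_sum, transpose_mul, transpose_transpose, hB, ← mul_assoc]
  rw [← sum_range_reflect]
  refine sum_congr rfl fun j hj => ?_
  rw [Nat.add_sub_cancel, Nat.sub_sub_self (mem_range_succ_iff.mp hj)]

variable [DecidableEq ι]

theorem sum_range_transpose_mul_mul_eq {B : Matrix ι ι R} (hB : Bᵀ = B)
    {V : ℕ → Matrix ι ι R} (hV0 : V 0 = 1) (n : ℕ) :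
    ∑ j ∈ range (n + 2), (V j)ᵀ * B * V (n + 1 - j) =
      B * V (n + 1) + ∑ j ∈ Icc 1 n, (V j)ᵀ * B * V (n + 1 - j) + (B * V (n + 1))ᵀ := by
  rw [sum_range_succ, range_eq_Ico, sum_eq_sum_Ico_succ_bot (by omega),
    Ico_add_one_right_eq_Icc, Nat.sub_self, hV0, transpose_mul, hB]
  simp

end TransposeConvolution

section BlockToeplitz

theorem revE_mul_apply {b m : ℕ} {κ : Type*} (X : Matrix (Fin b × Fin m) κ ℂ)
    (x : Fin b × Fin m) (y : κ) : (revE b m * X) x y = X (x.1.rev, x.2) y := by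
  rw [mul_apply, sum_eq_single (x.1.rev, x.2)]
  · simp [revE, Fin.val_rev]
    omega
  · rintro z - hz
    rw [revE, of_apply, if_neg, zero_mul]
    rintro ⟨h1, h2⟩
    exact hz (Prod.ext (Fin.ext (by simp [Fin.val_rev]; omega)) h2.symm)
  · simp

theorem mul_revE_apply {b m : ℕ} {κ : Type*} (X : Matrix κ (Fin b × Fin m) ℂ)
    (x : κ) (y : Fin b × Fin m) : (X * revE b m) x y = X x (y.1.rev, y.2) := by
  rw [mul_apply, sum_eq_single (y.1.rev, y.2)]
  · simp [revE, Fin.val_rev]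
    omega
  · rintro z - hz
    rw [revE, of_apply, if_neg, mul_zero]
    rintro ⟨h1, h2⟩
    exact hz (Prod.ext (Fin.ext (by simp [Fin.val_rev]; omega)) h2)
  · simp

theorem revE_mul_transpose_blkToeplitz_mul_revE {β p q : ℕ}
    (A : ℕ → Matrix (Fin p) (Fin q) ℂ) :
    revE β q * (blkToeplitz β p q A)ᵀ * revE β p = blkToeplitz β q p fun k => (A k)ᵀ := by
  ext x y
  rw [mul_revE_apply, revE_mul_apply, transpose_apply]
  simp only [blkToeplitz, of_apply, transpose_apply, Fin.val_rev]
  have := x.1.isLt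
  have := y.1.isLt
  by_cases h : (x.1 : ℕ) ≤ y.1
  · rw [if_pos (by omega), if_pos h, show β - (x.1 + 1) - (β - (y.1 + 1)) = y.1 - x.1 by omega]
  · rw [if_neg (by omega), if_neg h]

theorem blkToeplitz_mul_blkToeplitz {β p q r : ℕ} (A : ℕ → Matrix (Fin p) (Fin q) ℂ)
    (C : ℕ → Matrix (Fin q) (Fin r) ℂ) :
    blkToeplitz β p q A * blkToeplitz β q r C =
      blkToeplitz β p r fun k => ∑ d ∈ range (k + 1), A d * C (k - d) := by
  ext x y
  have hterm : ∀ l : Fin β, ∑ c, blkToeplitz β p q A x (l, c) * blkToeplitz β q r C (l, c) y =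
      if (x.1 : ℕ) ≤ l ∧ (l : ℕ) ≤ y.1 then (A (l - x.1) * C (y.1 - l)) x.2 y.2 else 0 := by
    intro l
    simp only [blkToeplitz, of_apply]
    by_cases h1 : (x.1 : ℕ) ≤ l <;> by_cases h2 : (l : ℕ) ≤ y.1 <;> simp [h1, h2, mul_apply]
  rw [mul_apply, Fintype.sum_prod_type, sum_congr rfl fun l _ => hterm l,
    Fin.sum_univ_eq_sum_range (fun l => if x.1 ≤ l ∧ l ≤ y.1 then
      (A (l - x.1) * C (y.1 - l)) x.2 y.2 else 0), ← sum_filter]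
  simp only [blkToeplitz, of_apply]
  split_ifs with hxy
  · have hIco : {l ∈ range β | (x.1 : ℕ) ≤ l ∧ l ≤ y.1} = Ico (x.1 : ℕ) (y.1 + 1) := by
      ext l
      simp only [mem_filter, mem_range, mem_Ico]
      have := y.1.isLt
      omega
    rw [hIco, sum_Ico_eq_sum_range, Nat.sub_add_comm hxy, Matrix.sum_apply]
    refine sum_congr rfl fun d _ => ?_
    rw [Nat.add_sub_cancel_left, Nat.sub_add_eq, Nat.sub_right_comm]
  · rw [sum_eq_zero]
    intro l hl
    simp only [mem_filter] at hl
    omega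

theorem blkToeplitz_ite_zero {β p q : ℕ} (B : Matrix (Fin p) (Fin q) ℂ) :
    blkToeplitz β p q (fun k => if k = 0 then B else 0) =
      Matrix.of fun x y => if x.1 = y.1 then B x.2 y.2 else 0 := by
  ext x y
  simp only [blkToeplitz, of_apply, Fin.ext_iff]
  split_ifs <;> first | omega | rfl

theorem blkToeplitz_ite_zero_mul {β p q r : ℕ} (B : Matrix (Fin p) (Fin q) ℂ)
    (C : ℕ → Matrix (Fin q) (Fin r) ℂ) :
    blkToeplitz β p q (fun k => if k = 0 then B else 0) * blkToeplitz β q r C =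
      blkToeplitz β p r fun k => B * C k := by
  rw [blkToeplitz_mul_blkToeplitz]
  congr 1
  funext k
  simp [sum_range_succ']

end BlockToeplitz

theorem sum_range_transpose_mul_mul_eq_zero {ι K : Type*} [Fintype ι] [DecidableEq ι]
    [Field K] [CharZero K] {B : Matrix ι ι K} (hB : Bᵀ = B) {V Z : ℕ → Matrix ι ι K}
    (hV0 : V 0 = 1) (hZ : ∀ n, (Z (n + 1))ᵀ = -Z (n + 1))
    (hBV : ∀ n, B * V (n + 1) =
      (2 : K)⁻¹ • (Z (n + 1) - ∑ j ∈ Icc 1 n, (V j)ᵀ * B * V (n + 1 - j))) (n : ℕ) :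
    ∑ j ∈ range (n + 2), (V j)ᵀ * B * V (n + 1 - j) = 0 := by
  have hS := transpose_sum_range_transpose_mul_mul hB V (n + 1)
  rw [sum_range_transpose_mul_mul_eq hB hV0] at hS ⊢
  set M := ∑ j ∈ Icc 1 n, (V j)ᵀ * B * V (n + 1 - j)
  set X := B * V (n + 1)
  rw [transpose_add, transpose_add, transpose_transpose] at hS
  have hM : Mᵀ = M := calc
    Mᵀ = Xᵀ + Mᵀ + X - X - Xᵀ := by abel
    _ = M := by rw [hS]; abel
  have hX : X = (2 : K)⁻¹ • (Z (n + 1) - M) := hBV n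
  rw [hX, transpose_smul, transpose_sub, hZ, hM]
  module

theorem stmt13_general (m : ℕ)
    (B0 : Matrix (Fin m) (Fin m) ℂ) (hB0 : IsUnit B0) (hB0sym : B0ᵀ = B0)
    (Z V : ℕ → Matrix (Fin m) (Fin m) ℂ)
    (hZ : ∀ n, 1 ≤ n → (Z n)ᵀ = -Z n)
    (hV0 : V 0 = 1)
    (hV1 : V 1 = (2 : ℂ)⁻¹ • (B0⁻¹ * Z 1))
    (hVrec : ∀ n, 1 ≤ n →
      V (n + 1) = (2 : ℂ)⁻¹ •
        (B0⁻¹ * (Z (n + 1) - ∑ j ∈ Finset.Icc 1 n, (V j)ᵀ * B0 * V (n + 1 - j)))) :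
    (∀ n, 1 ≤ n → ∑ j ∈ Finset.range (n + 1), (V j)ᵀ * B0 * V (n - j) = 0) ∧
    (∀ α, 1 ≤ α →
      revE α m * (blkToeplitz α m m V)ᵀ * revE α m *
          (Matrix.of fun p q : Fin α × Fin m => if p.1 = q.1 then B0 p.2 q.2 else 0) *
          blkToeplitz α m m V =
        Matrix.of fun p q : Fin α × Fin m => if p.1 = q.1 then B0 p.2 q.2 else 0) := by
  have hdet : IsUnit B0.det := (isUnit_iff_isUnit_det B0).mp hB0
  have hBV : ∀ n, B0 * V (n + 1) =
      (2 : ℂ)⁻¹ • (Z (n + 1) - ∑ j ∈ Icc 1 n, (V j)ᵀ * B0 * V (n + 1 - j)) := by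
    rintro (_ | n)
    · simp [hV1, mul_nonsing_inv_cancel_left _ _ hdet]
    · rw [hVrec (n + 1) n.succ_pos, Matrix.mul_smul, mul_nonsing_inv_cancel_left _ _ hdet]
  have hS : ∀ n, ∑ j ∈ range (n + 1), (V j)ᵀ * B0 * V (n - j) = if n = 0 then B0 else 0 := by
    rintro (_ | n)
    · simp [hV0]
    · simpa using sum_range_transpose_mul_mul_eq_zero hB0sym hV0
        (fun n => hZ (n + 1) n.succ_pos) hBV n
  refine ⟨fun n hn => by simpa [Nat.one_le_iff_ne_zero.mp hn] using hS n, fun α _ => ?_⟩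
  rw [revE_mul_transpose_blkToeplitz_mul_revE, mul_assoc, ← blkToeplitz_ite_zero,
    blkToeplitz_ite_zero_mul, blkToeplitz_mul_blkToeplitz]
  congr 1
  funext n
  simpa only [← mul_assoc] using hS n

/-- With `B_0` invertible symmetric, `Z_n` skew-symmetric, `V_0 = I`,
`V_1 = ½B_0⁻¹Z_1` and `V_{n+1} = ½B_0⁻¹(Z_{n+1} − Σ_{j=1}^n V_jᵀ B_0 V_{n+1−j})`, one has
`Σ_{j=0}^n V_jᵀ B_0 V_{n−j} = 0` for all `n ≥ 1`; equivalently, for every `α ≥ 1` the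
block Toeplitz matrix `𝒱 = T(I, V_1, …, V_{α−1})` satisfies
`E_α(I_m)·𝒱ᵀ·E_α(I_m)·(⊕ B_0)·𝒱 = ⊕ B_0`. -/
theorem stmt13 (m : ℕ) (hm : 1 ≤ m)
    (B0 : Matrix (Fin m) (Fin m) ℂ) (hB0 : IsUnit B0) (hB0sym : B0ᵀ = B0)
    (Z V : ℕ → Matrix (Fin m) (Fin m) ℂ)
    (hZ : ∀ n, 1 ≤ n → (Z n)ᵀ = -Z n)
    (hV0 : V 0 = 1)
    (hV1 : V 1 = (2 : ℂ)⁻¹ • (B0⁻¹ * Z 1))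
    (hVrec : ∀ n, 1 ≤ n →
      V (n + 1) = (2 : ℂ)⁻¹ •
        (B0⁻¹ * (Z (n + 1) - ∑ j ∈ Finset.Icc 1 n, (V j)ᵀ * B0 * V (n + 1 - j)))) :
    (∀ n, 1 ≤ n → ∑ j ∈ Finset.range (n + 1), (V j)ᵀ * B0 * V (n - j) = 0) ∧
    (∀ α, 1 ≤ α →
      revE α m * (blkToeplitz α m m V)ᵀ * revE α m *
          (Matrix.of fun p q : Fin α × Fin m => if p.1 = q.1 then B0 p.2 q.2 else 0) *
          blkToeplitz α m m V =
        Matrix.of fun p q : Fin α × Fin m => if p.1 = q.1 then B0 p.2 q.2 else 0) :=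
  stmt13_general m B0 hB0 hB0sym Z V hZ hV0 hV1 hVrec
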